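/- Let m, N ≥ 1 and let ρ be a continuous map from real m×m matrices to complex N×N matrices satisfying ρ(AB) = ρ(A)·ρ(B) for all A, B and ρ(1_m) = 1_N. Let s ∈ ℂ and assume that Y ↦ ρ(Y)·det(Y)^s·e^{−tr(Y)} is integrable over the cone {Y > 0} with respect to dY_inv, and set Γ(ρ⊗det^s) = ∫_{Y>0} ρ(Y) det(Y)^s e^{−tr Y} dY_inv ∈ Mat_N(ℂ). Then for every k in the special orthogonal group SO(m) (real m×m matrices with kᵀk = 1 and det k = 1) one has Γ(ρ⊗det^s) = ρ(kᵀ) · Γ(ρ⊗det^s) · ρ(k). -/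

import Mathlib

open MeasureTheory Matrix

/-- Index set for the entries `Y_{ij}`, `i ≤ j`, of a symmetric `m × m` matrix. -/
abbrev SymIdx (m : ℕ) : Type := {p : Fin m × Fin m // p.1 ≤ p.2}

/-- The symmetric matrix with prescribed upper-triangular entries. -/
def symOf {m : ℕ} (y : SymIdx m → ℝ) : Matrix (Fin m) (Fin m) ℝ :=
  Matrix.of fun i j =>
    if h : i ≤ j then y ⟨(i, j), h⟩ else y ⟨(j, i), le_of_not_ge h⟩

/-- The matrix-valued (entrywise) Gamma integral
`Γ(ρ ⊗ det^s) = ∫_{Y>0} ρ(Y) det(Y)^s e^{-tr Y} dY_inv`. -/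
noncomputable def GammaOp (m N : ℕ)
    (ρ : Matrix (Fin m) (Fin m) ℝ → Matrix (Fin N) (Fin N) ℂ) (s : ℂ) :
    Matrix (Fin N) (Fin N) ℂ :=
  Matrix.of fun i j =>
    ∫ y in {y : SymIdx m → ℝ | (symOf y).PosDef},
      ρ (symOf y) i j *
        (((symOf y).det : ℂ) ^ (s - ((m : ℂ) + 1) / 2) *
          Complex.exp (-((symOf y).trace : ℂ)))

/-!
The substitution `Y ↦ kᵀ Y k` is a linear automorphism of the coordinate space of symmetric
matrices which maps the positive definite cone onto itself and fixes `det Y` and `tr Y`.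
It preserves the nondegenerate trace form `(Y, Z) ↦ tr (Y Z)`, so its determinant squares to `1`
and it preserves Lebesgue measure. Substituting in the integral and using
`ρ (kᵀ Y k) = ρ kᵀ ρ Y ρ k` pulls the constant matrices out of the entrywise integral.
-/

theorem LinearMap.det_mul_self_eq_one_of_separatingLeft {ι K : Type*} [Fintype ι] [DecidableEq ι]
    [Field K] {B : (ι → K) →ₗ[K] (ι → K) →ₗ[K] K} (hB : B.SeparatingLeft)
    {f : (ι → K) →ₗ[K] ι → K} (hf : ∀ x y, B (f x) (f y) = B x y) :
    LinearMap.det f * LinearMap.det f = 1 := by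
  have hW : (LinearMap.toMatrix₂' K B).det ≠ 0 :=
    Matrix.separatingLeft_iff_det_ne_zero.mp (LinearMap.separatingLeft_toMatrix₂'_iff.mpr hB)
  have hcompl : (LinearMap.toMatrix' f)ᵀ * LinearMap.toMatrix₂' K B * LinearMap.toMatrix' f =
      LinearMap.toMatrix₂' K B := by
    rw [← LinearMap.toMatrix₂'_compl₁₂]
    congr 1
    ext x y
    exact hf _ _
  have hdet := congrArg Matrix.det hcompl
  rw [det_mul, det_mul, det_transpose, LinearMap.det_toMatrix'] at hdet
  exact mul_left_cancel₀ hW (by linear_combination hdet)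

section AddHaar

variable {E F : Type*} [NormedAddCommGroup E] [NormedSpace ℝ E] [MeasurableSpace E] [BorelSpace E]
  [FiniteDimensional ℝ E] [NormedAddCommGroup F] [NormedSpace ℝ F]
  (μ : Measure E) [μ.IsAddHaarMeasure]

theorem LinearMap.measurePreserving_of_abs_det_eq_one {f : E →ₗ[ℝ] E}
    (hf : |LinearMap.det f| = 1) : MeasurePreserving f μ μ := by
  have hf0 : LinearMap.det f ≠ 0 := by
    rintro h; simp [h] at hf
  refine ⟨f.continuous_of_finiteDimensional.measurable, ?_⟩
  rw [Measure.map_linearMap_addHaar_eq_smul_addHaar μ hf0, abs_inv, hf]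
  simp

theorem LinearEquiv.setIntegral_comp_of_abs_det_eq_one (e : E ≃ₗ[ℝ] E)
    (he : |LinearMap.det (e : E →ₗ[ℝ] E)| = 1) (g : E → F) (s : Set E) :
    ∫ x in e ⁻¹' s, g (e x) ∂μ = ∫ x in s, g x ∂μ :=
  (LinearMap.measurePreserving_of_abs_det_eq_one μ he).setIntegral_preimage_emb
    e.toContinuousLinearEquiv.toHomeomorph.measurableEmbedding g s

end AddHaar

theorem Matrix.integral_mul_mul_apply_mul {α n 𝕜 : Type*} [MeasurableSpace α] {μ : Measure α}
    [Fintype n] [RCLike 𝕜] (A B : Matrix n n 𝕜) (F : α → Matrix n n 𝕜) (c : α → 𝕜)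
    (hF : ∀ a b, Integrable (fun y => F y a b * c y) μ) (i j : n) :
    ∫ y, (A * F y * B) i j * c y ∂μ = (A * of (fun a b => ∫ y, F y a b * c y ∂μ) * B) i j := by
  have hterm : ∀ a b, Integrable (fun y => A i a * B b j * (F y a b * c y)) μ :=
    fun a b => (hF a b).const_mul _
  calc ∫ y, (A * F y * B) i j * c y ∂μ
      = ∫ y, ∑ b, ∑ a, A i a * B b j * (F y a b * c y) ∂μ := by
        congr 1; ext y
        simp only [mul_apply, Finset.sum_mul]
        exact Finset.sum_congr rfl fun b _ => Finset.sum_congr rfl fun a _ => by ring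
    _ = ∑ b, ∑ a, A i a * B b j * ∫ y, F y a b * c y ∂μ := by
        rw [integral_finsetSum _ fun b _ => integrable_finsetSum _ fun a _ => hterm a b]
        refine Finset.sum_congr rfl fun b _ => ?_
        rw [integral_finsetSum _ fun a _ => hterm a b]
        simp only [integral_const_mul]
    _ = (A * of (fun a b => ∫ y, F y a b * c y ∂μ) * B) i j := by
        simp only [mul_apply, of_apply, Finset.sum_mul]
        exact Finset.sum_congr rfl fun b _ => Finset.sum_congr rfl fun a _ => by ring

section OrthogonalConjugation

variable {n : Type*} [Fintype n] [DecidableEq n] {k A : Matrix n n ℝ}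

theorem trace_transpose_mul_mul (hk : kᵀ * k = 1) : (kᵀ * A * k).trace = A.trace := by
  rw [trace_mul_cycle, mul_eq_one_comm.mp hk, one_mul]

theorem det_transpose_mul_mul (hk : kᵀ * k = 1) : (kᵀ * A * k).det = A.det := by
  rw [det_mul, det_mul, mul_right_comm, ← det_mul, hk, det_one, one_mul]

theorem posDef_transpose_mul_mul_iff (hk : kᵀ * k = 1) : (kᵀ * A * k).PosDef ↔ A.PosDef := by
  simpa only [star_eq_conjTranspose, conjTranspose_eq_transpose_of_trivial] using
    (IsUnit.of_mul_eq_one_right kᵀ hk).posDef_star_left_conjugate_iff (x := A)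

end OrthogonalConjugation

section SymmetricCoordinates

variable {m : ℕ}

theorem symOf_transpose (y : SymIdx m → ℝ) : (symOf y)ᵀ = symOf y := by
  ext i j
  simp only [symOf, transpose_apply, of_apply]
  split_ifs with hji hij hij
  · obtain rfl := le_antisymm hji hij; rfl
  · rfl
  · rfl
  · exact absurd (le_total i j) (by tauto)

theorem symOf_add (y z : SymIdx m → ℝ) : symOf (y + z) = symOf y + symOf z := by
  ext i j
  simp only [symOf, of_apply, Matrix.add_apply, Pi.add_apply]
  split_ifs <;> rfl

theorem symOf_smul (c : ℝ) (y : SymIdx m → ℝ) : symOf (c • y) = c • symOf y := by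
  ext i j
  simp only [symOf, of_apply, Matrix.smul_apply, Pi.smul_apply]
  split_ifs <;> rfl

def coordsOf (A : Matrix (Fin m) (Fin m) ℝ) : SymIdx m → ℝ := fun p => A p.1.1 p.1.2

theorem coordsOf_symOf (y : SymIdx m → ℝ) : coordsOf (symOf y) = y := by
  funext p
  simp only [coordsOf, symOf, of_apply, dif_pos p.2]

theorem symOf_coordsOf {A : Matrix (Fin m) (Fin m) ℝ} (hA : Aᵀ = A) : symOf (coordsOf A) = A := by
  ext i j
  simp only [symOf, coordsOf, of_apply]
  split_ifs
  · rfl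
  · exact congrFun (congrFun hA i) j

def traceForm : LinearMap.BilinForm ℝ (SymIdx m → ℝ) :=
  LinearMap.mk₂ ℝ (fun y z => (symOf y * symOf z).trace)
    (fun y y' z => by simp only [symOf_add, add_mul, trace_add])
    (fun c y z => by simp only [symOf_smul, Matrix.smul_mul, trace_smul])
    (fun y z z' => by simp only [symOf_add, mul_add, trace_add])
    (fun c y z => by simp only [symOf_smul, Matrix.mul_smul, trace_smul])

theorem traceForm_separatingLeft : (traceForm (m := m)).SeparatingLeft := by
  intro y hy
  have hY : ((symOf y)ᴴ * symOf y).trace = 0 := by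
    rw [conjTranspose_eq_transpose_of_trivial, symOf_transpose]
    exact hy y
  rw [← coordsOf_symOf y, trace_conjTranspose_mul_self_eq_zero_iff.mp hY]
  rfl

def conjMap (k : Matrix (Fin m) (Fin m) ℝ) : (SymIdx m → ℝ) →ₗ[ℝ] SymIdx m → ℝ where
  toFun y := coordsOf (kᵀ * symOf y * k)
  map_add' y z := by
    simp only [symOf_add, mul_add, add_mul]
    rfl
  map_smul' c y := by
    simp only [symOf_smul, Matrix.mul_smul, Matrix.smul_mul]
    rfl

theorem symOf_conjMap (k : Matrix (Fin m) (Fin m) ℝ) (y : SymIdx m → ℝ) :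
    symOf (conjMap k y) = kᵀ * symOf y * k :=
  symOf_coordsOf (A := kᵀ * symOf y * k) <| by
    simp only [transpose_mul, transpose_transpose, symOf_transpose, mul_assoc]

theorem traceForm_conjMap {k : Matrix (Fin m) (Fin m) ℝ} (hk : kᵀ * k = 1) (y z : SymIdx m → ℝ) :
    traceForm (conjMap k y) (conjMap k z) = traceForm y z := by
  have hk' : k * kᵀ = 1 := mul_eq_one_comm.mp hk
  simp only [traceForm, LinearMap.mk₂_apply, symOf_conjMap]
  calc (kᵀ * symOf y * k * (kᵀ * symOf z * k)).trace
      = (kᵀ * (symOf y * (k * kᵀ) * symOf z) * k).trace := by simp only [mul_assoc]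
    _ = (symOf y * symOf z).trace := by rw [hk', mul_one, trace_transpose_mul_mul hk]

theorem abs_det_conjMap {k : Matrix (Fin m) (Fin m) ℝ} (hk : kᵀ * k = 1) :
    |LinearMap.det (conjMap k)| = 1 := by
  rcases mul_self_eq_one_iff.mp
    (LinearMap.det_mul_self_eq_one_of_separatingLeft traceForm_separatingLeft
      (traceForm_conjMap hk)) with h | h <;> simp [h]

theorem conjMap_transpose_conjMap {k : Matrix (Fin m) (Fin m) ℝ} (hk : kᵀ * k = 1)
    (y : SymIdx m → ℝ) : conjMap kᵀ (conjMap k y) = y := by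
  have hk' : k * kᵀ = 1 := mul_eq_one_comm.mp hk
  rw [← coordsOf_symOf (conjMap kᵀ _), symOf_conjMap, symOf_conjMap, transpose_transpose]
  simp only [← mul_assoc, hk', one_mul]
  simp only [mul_assoc, hk', mul_one, coordsOf_symOf]

def conjEquiv {k : Matrix (Fin m) (Fin m) ℝ} (hk : kᵀ * k = 1) :
    (SymIdx m → ℝ) ≃ₗ[ℝ] SymIdx m → ℝ :=
  { conjMap k with
    invFun := conjMap kᵀ
    left_inv := conjMap_transpose_conjMap hk
    right_inv y := by
      have h := conjMap_transpose_conjMap (k := kᵀ)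
        (by rw [transpose_transpose, mul_eq_one_comm, hk]) y
      rw [transpose_transpose] at h
      exact h }

theorem conjEquiv_apply {k : Matrix (Fin m) (Fin m) ℝ} (hk : kᵀ * k = 1) (y : SymIdx m → ℝ) :
    conjEquiv hk y = conjMap k y :=
  rfl

theorem setIntegral_posDef_transpose_mul_mul {E : Type*} [NormedAddCommGroup E] [NormedSpace ℝ E]
    (F : Matrix (Fin m) (Fin m) ℝ → E) {k : Matrix (Fin m) (Fin m) ℝ} (hk : kᵀ * k = 1) :
    ∫ y in {y : SymIdx m → ℝ | (symOf y).PosDef}, F (kᵀ * symOf y * k) =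
      ∫ y in {y : SymIdx m → ℝ | (symOf y).PosDef}, F (symOf y) := by
  have hpre : conjEquiv hk ⁻¹' {y | (symOf y).PosDef} = {y | (symOf y).PosDef} := by
    ext y
    simp only [Set.mem_preimage, Set.mem_ofPred_eq, conjEquiv_apply, symOf_conjMap]
    exact posDef_transpose_mul_mul_iff hk
  calc ∫ y in {y : SymIdx m → ℝ | (symOf y).PosDef}, F (kᵀ * symOf y * k)
      = ∫ y in conjEquiv hk ⁻¹' {y | (symOf y).PosDef}, F (symOf (conjEquiv hk y)) := by
        simp only [hpre, conjEquiv_apply, symOf_conjMap]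
    _ = ∫ y in {y : SymIdx m → ℝ | (symOf y).PosDef}, F (symOf y) :=
        (conjEquiv hk).setIntegral_comp_of_abs_det_eq_one volume (abs_det_conjMap hk)
          (fun y => F (symOf y)) _

end SymmetricCoordinates

theorem gammaOp_so_invariant_general (m N : ℕ)
    (ρ : Matrix (Fin m) (Fin m) ℝ → Matrix (Fin N) (Fin N) ℂ)
    (hmul : ∀ A B : Matrix (Fin m) (Fin m) ℝ, ρ (A * B) = ρ A * ρ B)
    (s : ℂ)
    (hint : ∀ i j : Fin N,
      IntegrableOn
        (fun y : SymIdx m → ℝ =>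
          ρ (symOf y) i j *
            (((symOf y).det : ℂ) ^ (s - ((m : ℂ) + 1) / 2) *
              Complex.exp (-((symOf y).trace : ℂ))))
        {y : SymIdx m → ℝ | (symOf y).PosDef})
    (k : Matrix (Fin m) (Fin m) ℝ) (hk : kᵀ * k = 1) :
    GammaOp m N ρ s = ρ kᵀ * GammaOp m N ρ s * ρ k := by
  set g : Matrix (Fin m) (Fin m) ℝ → ℂ := fun Y =>
    (Y.det : ℂ) ^ (s - ((m : ℂ) + 1) / 2) * Complex.exp (-(Y.trace : ℂ))
  have hg : ∀ Y, g (kᵀ * Y * k) = g Y := fun Y => by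
    simp only [g, det_transpose_mul_mul hk, trace_transpose_mul_mul hk]
  ext i j
  calc GammaOp m N ρ s i j
      = ∫ y in {y : SymIdx m → ℝ | (symOf y).PosDef}, ρ (symOf y) i j * g (symOf y) := rfl
    _ = ∫ y in {y : SymIdx m → ℝ | (symOf y).PosDef},
          ρ (kᵀ * symOf y * k) i j * g (kᵀ * symOf y * k) :=
        (setIntegral_posDef_transpose_mul_mul (fun Y => ρ Y i j * g Y) hk).symm
    _ = ∫ y in {y : SymIdx m → ℝ | (symOf y).PosDef},
          (ρ kᵀ * ρ (symOf y) * ρ k) i j * g (symOf y) := by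
        simp only [hmul, hg]
    _ = (ρ kᵀ * GammaOp m N ρ s * ρ k) i j :=
        integral_mul_mul_apply_mul _ _ _ _ hint i j

/-- The Gamma integral `Γ(ρ ⊗ det^s)` is invariant under orthogonal transformations:
`Γ(ρ ⊗ det^s) = ρ(kᵀ) Γ(ρ ⊗ det^s) ρ(k)` for all `k ∈ SO(m)`. -/
theorem gammaOp_so_invariant (m N : ℕ) (hm : 1 ≤ m) (hN : 1 ≤ N)
    (ρ : Matrix (Fin m) (Fin m) ℝ → Matrix (Fin N) (Fin N) ℂ)
    (hcont : Continuous ρ)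
    (hmul : ∀ A B : Matrix (Fin m) (Fin m) ℝ, ρ (A * B) = ρ A * ρ B)
    (hone : ρ 1 = 1) (s : ℂ)
    (hint : ∀ i j : Fin N,
      IntegrableOn
        (fun y : SymIdx m → ℝ =>
          ρ (symOf y) i j *
            (((symOf y).det : ℂ) ^ (s - ((m : ℂ) + 1) / 2) *
              Complex.exp (-((symOf y).trace : ℂ))))
        {y : SymIdx m → ℝ | (symOf y).PosDef})
    (k : Matrix (Fin m) (Fin m) ℝ) (hk : kᵀ * k = 1) (hdet : k.det = 1) :
    GammaOp m N ρ s = ρ kᵀ * GammaOp m N ρ s * ρ k :=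
  gammaOp_so_invariant_general m N ρ hmul s hint k hk
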